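/- arXiv:1401.7908 — 2 statements merged into one kernel-verified Lean document; each statement's English description precedes it below -/
import Mathlib

section
/- Let X be an arbitrary set, let (x_n)_{n≥0} be a sequence of mutually distinct points of X, and let (a_n)_{n≥0} be real numbers with a_n ≥ 0 for all n, ∑_{n=0}^∞ a_n = 1. Define L(f) := ∑_{n=0}^∞ a_n f(x_n) for bounded f : X → ℝ. Then for all bounded functions f, g : X → ℝ one has |L(f·g) − L(f)·L(g)| ≤ (1/2)·(1 − ∑_{n=0}^∞ a_n²) · osc_L(f) · osc_L(g), where osc_L(f) := sup{|f(x_n) − f(x_m)| : 0 ≤ n < m < ∞} and similarly for g. -/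
/-!
Expanding the product, `∑_{n,m} a n a m (F n - F m) (G n - G m) = 2 (L(FG) - L(F) L(G))`.
The diagonal terms vanish, each off-diagonal term is at most `a n a m · osc F · osc G` in absolute
value, and the off-diagonal weights sum to `(∑ a n)² - ∑ a n ^ 2 = 1 - ∑ a n ^ 2`.
-/

open Set

section WeightedCovariance

variable {ι κ : Type*} {a : ι → ℝ}

theorem Summable.hasSum_prod_mul {u : ι → ℝ} {v : κ → ℝ} (hu : Summable u) (hv : Summable v) :
    HasSum (fun p : ι × κ => u p.1 * v p.2) ((∑' i, u i) * ∑' j, v j) :=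
  hu.hasSum.mul hv.hasSum (summable_mul_of_summable_norm hu.abs hv.abs)

theorem Summable.mul_of_abs_le {F : ι → ℝ} {C : ℝ} (ha : Summable a) (hF : ∀ i, |F i| ≤ C) :
    Summable fun i => a i * F i :=
  .of_norm_bounded (ha.abs.mul_right C) fun i => by
    rw [Real.norm_eq_abs, abs_mul]
    exact mul_le_mul_of_nonneg_left (hF i) (abs_nonneg _)

theorem exists_abs_mul_le {F G : ι → ℝ} (hF : ∃ C, ∀ i, |F i| ≤ C) (hG : ∃ C, ∀ i, |G i| ≤ C) :
    ∃ C, ∀ i, |F i * G i| ≤ C := by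
  obtain ⟨C, hC⟩ := hF
  obtain ⟨D, hD⟩ := hG
  exact ⟨C * D, fun i => abs_mul (F i) (G i) ▸
    mul_le_mul (hC i) (hD i) (abs_nonneg _) ((abs_nonneg _).trans (hC i))⟩

theorem hasSum_mul_mul_sub_mul_sub {F G : ι → ℝ} (ha : Summable a) (ha1 : ∑' i, a i = 1)
    (hF : Summable fun i => a i * F i) (hG : Summable fun i => a i * G i)
    (hFG : Summable fun i => a i * (F i * G i)) :
    HasSum (fun p : ι × ι => a p.1 * a p.2 * ((F p.1 - F p.2) * (G p.1 - G p.2)))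
      (2 * (∑' i, a i * (F i * G i) - (∑' i, a i * F i) * ∑' i, a i * G i)) := by
  have h := ((hFG.hasSum_prod_mul ha).add (ha.hasSum_prod_mul hFG)).sub
    ((hF.hasSum_prod_mul hG).add (hG.hasSum_prod_mul hF))
  rw [ha1] at h
  exact (congrArg₂ HasSum (funext fun p => by ring) (by ring)).mpr h

theorem hasSum_indicator_diagonal_compl (ha : Summable a) (ha1 : ∑' i, a i = 1) :
    HasSum ((diagonal ι)ᶜ.indicator fun p => a p.1 * a p.2) (1 - ∑' i, a i ^ 2) := by
  have hprod : HasSum (fun p : ι × ι => a p.1 * a p.2) 1 := by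
    simpa [ha1] using ha.hasSum_prod_mul ha
  have hdiag : ∑' p, (diagonal ι).indicator (fun p => a p.1 * a p.2) p = ∑' i, a i ^ 2 := by
    rw [← Function.diag_injective.tsum_eq (support_indicator_subset.trans range_diag.ge)]
    simp [Function.diag, sq]
  rw [indicator_compl, ← hdiag]
  exact hprod.sub (hprod.summable.indicator _).hasSum

theorem abs_mul_mul_sub_mul_sub_le_indicator {F G : ι → ℝ} {M N : ℝ} (ha₀ : ∀ i, 0 ≤ a i)
    (hFM : ∀ i j, i ≠ j → |F i - F j| ≤ M) (hGN : ∀ i j, i ≠ j → |G i - G j| ≤ N)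
    (p : ι × ι) :
    |a p.1 * a p.2 * ((F p.1 - F p.2) * (G p.1 - G p.2))| ≤
      (diagonal ι)ᶜ.indicator (fun p => a p.1 * a p.2) p * (M * N) := by
  obtain ⟨i, j⟩ := p
  rcases eq_or_ne i j with rfl | hij
  · simp
  dsimp only
  rw [indicator_of_mem (by exact hij), abs_mul, abs_mul, abs_mul, abs_of_nonneg (ha₀ i),
    abs_of_nonneg (ha₀ j)]
  have hM : 0 ≤ M := (abs_nonneg _).trans (hFM i j hij)
  gcongr
  exacts [mul_nonneg (ha₀ i) (ha₀ j), hFM i j hij, hGN i j hij]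

theorem abs_tsum_mul_sub_tsum_mul_tsum_le {F G : ι → ℝ} {M N : ℝ} (ha₀ : ∀ i, 0 ≤ a i)
    (ha : Summable a) (ha1 : ∑' i, a i = 1)
    (hF : ∃ C, ∀ i, |F i| ≤ C) (hG : ∃ C, ∀ i, |G i| ≤ C)
    (hFM : ∀ i j, i ≠ j → |F i - F j| ≤ M) (hGN : ∀ i j, i ≠ j → |G i - G j| ≤ N) :
    |∑' i, a i * (F i * G i) - (∑' i, a i * F i) * ∑' i, a i * G i| ≤
      1 / 2 * (1 - ∑' i, a i ^ 2) * M * N := by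
  have summable_of_bdd {H : ι → ℝ} (hH : ∃ C, ∀ i, |H i| ≤ C) : Summable fun i => a i * H i :=
    hH.elim fun _ hC => ha.mul_of_abs_le hC
  have h := (hasSum_mul_mul_sub_mul_sub ha ha1 (summable_of_bdd hF) (summable_of_bdd hG)
    (summable_of_bdd (exists_abs_mul_le hF hG))).norm_le_of_bounded
    ((hasSum_indicator_diagonal_compl ha ha1).mul_right (M * N))
    (abs_mul_mul_sub_mul_sub_le_indicator ha₀ hFM hGN)
  rw [Real.norm_eq_abs, abs_mul, abs_two] at h
  linarith

end WeightedCovariance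

section Oscillation

variable {ι : Type*} [LinearOrder ι]

theorem abs_sub_le_sSup_of_ne {F : ι → ℝ} (hF : ∃ C, ∀ i, |F i| ≤ C) {i j : ι} (hij : i ≠ j) :
    |F i - F j| ≤ sSup {d : ℝ | ∃ n m : ι, n < m ∧ d = |F n - F m|} := by
  obtain ⟨C, hC⟩ := hF
  have hbdd : BddAbove {d : ℝ | ∃ n m : ι, n < m ∧ d = |F n - F m|} := by
    refine ⟨C + C, ?_⟩
    rintro d ⟨n, m, -, rfl⟩
    exact (abs_sub _ _).trans (add_le_add (hC n) (hC m))
  rcases hij.lt_or_gt with h | h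
  · exact le_csSup hbdd ⟨i, j, h, rfl⟩
  · exact le_csSup hbdd ⟨j, i, h, abs_sub_comm _ _⟩

end Oscillation

theorem discrete_chebyshev_gruss_positive_general {X : Type*} (x : ℕ → X)
    (a : ℕ → ℝ) (hapos : ∀ n, 0 ≤ a n) (ha : Summable a) (ha1 : (∑' n, a n) = 1)
    (f g : X → ℝ) (hf : ∃ C, ∀ y, |f y| ≤ C) (hg : ∃ C, ∀ y, |g y| ≤ C) :
    |(∑' n, a n * (f (x n) * g (x n))) -
        (∑' n, a n * f (x n)) * (∑' n, a n * g (x n))| ≤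
      (1 / 2) * (1 - ∑' n, (a n) ^ 2) *
        sSup {d : ℝ | ∃ n m : ℕ, n < m ∧ d = |f (x n) - f (x m)|} *
        sSup {d : ℝ | ∃ n m : ℕ, n < m ∧ d = |g (x n) - g (x m)|} := by
  have hF : ∃ C, ∀ n, |f (x n)| ≤ C := hf.imp fun _ hC n => hC (x n)
  have hG : ∃ C, ∀ n, |g (x n)| ≤ C := hg.imp fun _ hC n => hC (x n)
  exact abs_tsum_mul_sub_tsum_mul_tsum_le hapos ha ha1 hF hG
    (fun _ _ => abs_sub_le_sSup_of_ne hF) (fun _ _ => abs_sub_le_sSup_of_ne hG)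

/-- Chebyshev-Grüss-type inequality for a discrete positive linear functional
`L f = ∑' n, a n * f (x n)` with `a n ≥ 0` and `∑ a n = 1`. -/
theorem discrete_chebyshev_gruss_positive {X : Type*} (x : ℕ → X) (hx : Function.Injective x)
    (a : ℕ → ℝ) (hapos : ∀ n, 0 ≤ a n) (ha : Summable a) (ha1 : (∑' n, a n) = 1)
    (f g : X → ℝ) (hf : ∃ C, ∀ y, |f y| ≤ C) (hg : ∃ C, ∀ y, |g y| ≤ C) :
    |(∑' n, a n * (f (x n) * g (x n))) -
        (∑' n, a n * f (x n)) * (∑' n, a n * g (x n))| ≤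
      (1 / 2) * (1 - ∑' n, (a n) ^ 2) *
        sSup {d : ℝ | ∃ n m : ℕ, n < m ∧ d = |f (x n) - f (x m)|} *
        sSup {d : ℝ | ∃ n m : ℕ, n < m ∧ d = |g (x n) - g (x m)|} :=
  discrete_chebyshev_gruss_positive_general x a hapos ha ha1 f g hf hg
end

section
/- Let n ≥ 1, and for f : [0,1] → ℝ let B_n f(x) := ∑_{k=0}^n f(k/n)·b_{n,k}(x), where b_{n,k}(x) := C(n,k) x^k (1−x)^{n−k}. Then for all bounded functions f, g : [0,1] → ℝ and all x ∈ [0,1], |B_n(f·g)(x) − B_n f(x)·B_n g(x)| ≤ (1/2)·(1 − (1/4^n)·C(2n,n))·osc_{B_n}(f)·osc_{B_n}(g), where osc_{B_n}(f) := max{|f(k/n) − f(l/n)| : 0 ≤ k < l ≤ n} and similarly for g. -/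
/-!
Since the Bernstein weights `b_{n,k}(x)` form a probability vector, the Grüss identity
`∑ p a b - (∑ p a)(∑ p b) = ½ ∑_{k,l} p_k p_l (a_k - a_l)(b_k - b_l)` bounds the left-hand side by
`½ (1 - ∑_k b_{n,k}(x)²) osc f osc g`, the diagonal terms vanishing. Parseval's identity for the
trigonometric polynomial `(x e^{it} + 1 - x)^n` gives
`2π ∑_k b_{n,k}(x)² = ∫_0^{2π} (1 - 2x(1-x)(1 - cos t))^n dt`, which decreases in `x(1-x) ≤ 1/4`;
hence `∑_k b_{n,k}(x)²` is smallest at `x = 1/2`, where Vandermonde's identity evaluates it to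
`C(2n,n)/4^n`.
-/

/-- The Bernstein basis polynomial `b_{n,k}(x) = C(n,k) x^k (1-x)^(n-k)`. -/
noncomputable def bernsteinBasis (n k : ℕ) (x : ℝ) : ℝ :=
  (n.choose k : ℝ) * x ^ k * (1 - x) ^ (n - k)

/-- The classical `n`-th Bernstein operator. -/
noncomputable def bernsteinOp (n : ℕ) (f : ℝ → ℝ) (x : ℝ) : ℝ :=
  ∑ k ∈ Finset.range (n + 1), f (k / n) * bernsteinBasis n k x

open Finset Real

section WeightedCovariance

variable {ι : Type*} (s : Finset ι) (p a b : ι → ℝ)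

theorem weighted_covariance_eq_half_sum_sum (hp : ∑ i ∈ s, p i = 1) :
    ∑ i ∈ s, a i * b i * p i - (∑ i ∈ s, a i * p i) * (∑ i ∈ s, b i * p i) =
      1 / 2 * ∑ i ∈ s, ∑ j ∈ s, p i * p j * (a i - a j) * (b i - b j) := by
  have expand : ∀ i j, p i * p j * (a i - a j) * (b i - b j) =
      a i * b i * p i * p j + p i * (a j * b j * p j)
        - a i * p i * (b j * p j) - b i * p i * (a j * p j) := fun i j => by ring
  simp only [expand, sum_add_distrib, sum_sub_distrib, ← sum_mul, ← mul_sum, hp]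
  ring

theorem abs_weighted_covariance_le [DecidableEq ι] {A B : ℝ} (hp0 : ∀ i ∈ s, 0 ≤ p i)
    (hp : ∑ i ∈ s, p i = 1) (ha : ∀ i ∈ s, ∀ j ∈ s, i ≠ j → |a i - a j| ≤ A)
    (hb : ∀ i ∈ s, ∀ j ∈ s, i ≠ j → |b i - b j| ≤ B) :
    |∑ i ∈ s, a i * b i * p i - (∑ i ∈ s, a i * p i) * (∑ i ∈ s, b i * p i)| ≤
      1 / 2 * (1 - ∑ i ∈ s, p i ^ 2) * A * B := by
  have hterm : ∀ i ∈ s, ∀ j ∈ s, |p i * p j * (a i - a j) * (b i - b j)| ≤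
      p i * p j * (A * B) - if i = j then p i * p j * (A * B) else 0 := by
    intro i hi j hj
    rcases eq_or_ne i j with rfl | hij
    · simp
    rw [if_neg hij, sub_zero, abs_mul, abs_mul, abs_of_nonneg (mul_nonneg (hp0 i hi) (hp0 j hj)),
      mul_assoc]
    have hA := ha i hi j hj hij
    exact mul_le_mul_of_nonneg_left
      (mul_le_mul hA (hb i hi j hj hij) (abs_nonneg _) ((abs_nonneg _).trans hA))
      (mul_nonneg (hp0 i hi) (hp0 j hj))
  have hdouble : |∑ i ∈ s, ∑ j ∈ s, p i * p j * (a i - a j) * (b i - b j)| ≤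
      (1 - ∑ i ∈ s, p i ^ 2) * (A * B) :=
    calc _ ≤ ∑ i ∈ s, ∑ j ∈ s, |p i * p j * (a i - a j) * (b i - b j)| :=
          (abs_sum_le_sum_abs _ _).trans (sum_le_sum fun i _ => abs_sum_le_sum_abs _ _)
      _ ≤ ∑ i ∈ s, ∑ j ∈ s, (p i * p j * (A * B) - if i = j then p i * p j * (A * B) else 0) :=
          sum_le_sum fun i hi => sum_le_sum fun j hj => hterm i hi j hj
      _ = (1 - ∑ i ∈ s, p i ^ 2) * (A * B) := by
          simp only [sum_sub_distrib, sum_ite_eq, ← sum_mul, ← mul_sum, hp, sq, sum_ite_mem,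
            inter_self]
          ring
  rw [weighted_covariance_eq_half_sum_sum s p a b hp, abs_mul, abs_of_pos one_half_pos]
  linarith

end WeightedCovariance

theorem bernsteinBasis_nonneg {x : ℝ} (hx : x ∈ Set.Icc (0 : ℝ) 1) (n k : ℕ) :
    0 ≤ bernsteinBasis n k x := by
  have hx0 := hx.1
  have hx1 := sub_nonneg.2 hx.2
  unfold bernsteinBasis
  positivity

theorem sum_bernsteinBasis (n : ℕ) (x : ℝ) : ∑ k ∈ range (n + 1), bernsteinBasis n k x = 1 := by
  calc _ = (x + (1 - x)) ^ n := by
        rw [add_pow]; exact sum_congr rfl fun k _ => by rw [bernsteinBasis]; ring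
    _ = 1 := by ring

theorem integral_exp_int_mul_mul_I (m : ℤ) :
    ∫ t in (0 : ℝ)..2 * π, Complex.exp (m * t * Complex.I) = if m = 0 then (2 * π : ℂ) else 0 := by
  split_ifs with hm
  · simp [hm]
  have hc : (m : ℂ) * Complex.I ≠ 0 := mul_ne_zero (Int.cast_ne_zero.2 hm) Complex.I_ne_zero
  have hperiod : Complex.exp (m * Complex.I * (2 * π : ℝ)) = 1 := by
    rw [← Complex.exp_int_mul_two_pi_mul_I m]; push_cast; ring_nf
  simp_rw [mul_right_comm _ _ Complex.I]
  rw [integral_exp_mul_complex hc, hperiod]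
  simp

theorem integral_sum_mul_sum_conj (s : Finset ℕ) (c : ℕ → ℝ) :
    ∫ t in (0 : ℝ)..2 * π, (∑ k ∈ s, c k * Complex.exp (k * (t * Complex.I))) *
        ∑ k ∈ s, c k * Complex.exp (k * -(t * Complex.I)) =
      2 * π * ∑ k ∈ s, (c k : ℂ) ^ 2 := by
  have hterm : ∀ k l : ℕ, ∀ t : ℝ,
      c k * Complex.exp (k * (t * Complex.I)) * (c l * Complex.exp (l * -(t * Complex.I))) =
        c k * c l * Complex.exp (((k - l : ℤ) : ℂ) * t * Complex.I) := by
    intro k l t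
    rw [mul_mul_mul_comm, ← Complex.exp_add]; push_cast; ring_nf
  have hcont : ∀ k l : ℕ, Continuous fun t : ℝ =>
      (c k : ℂ) * c l * Complex.exp (((k - l : ℤ) : ℂ) * t * Complex.I) := fun k l => by
    fun_prop
  simp_rw [sum_mul_sum, hterm]
  rw [intervalIntegral.integral_finsetSum fun k _ =>
    (continuous_finsetSum s fun l _ => hcont k l).intervalIntegrable _ _]
  rw [mul_sum]
  refine sum_congr rfl fun k hk => ?_
  rw [intervalIntegral.integral_finsetSum fun l _ => (hcont k l).intervalIntegrable _ _]
  simp only [intervalIntegral.integral_const_mul, integral_exp_int_mul_mul_I, sub_eq_zero,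
    Int.natCast_inj, mul_ite, mul_zero, sum_ite_eq, if_pos hk]
  ring

theorem sum_bernsteinBasis_mul_exp (n : ℕ) (x : ℝ) (z : ℂ) :
    ∑ k ∈ range (n + 1), (bernsteinBasis n k x : ℂ) * Complex.exp (k * z) =
      (x * Complex.exp z + (1 - x)) ^ n := by
  rw [add_pow]
  refine sum_congr rfl fun k _ => ?_
  rw [bernsteinBasis, mul_pow, ← Complex.exp_nat_mul]
  push_cast; ring

theorem ofReal_one_sub_mul_one_sub_cos (x t : ℝ) :
    ((1 - 2 * x * (1 - x) * (1 - cos t) : ℝ) : ℂ) =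
      (x * Complex.exp (t * Complex.I) + (1 - x)) *
        (x * Complex.exp (-(t * Complex.I)) + (1 - x)) := by
  have hinv : Complex.exp (t * Complex.I) * Complex.exp (-(t * Complex.I)) = 1 := by
    rw [← Complex.exp_add, add_neg_cancel, Complex.exp_zero]
  push_cast
  rw [Complex.cos, neg_mul]
  linear_combination (-(x : ℂ) ^ 2) * hinv

theorem integral_pow_eq_two_pi_mul_sum_bernsteinBasis_sq (n : ℕ) (x : ℝ) :
    ∫ t in (0 : ℝ)..2 * π, (1 - 2 * x * (1 - x) * (1 - cos t)) ^ n =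
      2 * π * ∑ k ∈ range (n + 1), bernsteinBasis n k x ^ 2 := by
  apply Complex.ofReal_injective
  rw [← intervalIntegral.integral_ofReal]
  simp_rw [Complex.ofReal_pow, ofReal_one_sub_mul_one_sub_cos, mul_pow,
    ← sum_bernsteinBasis_mul_exp, integral_sum_mul_sum_conj]
  push_cast
  rfl

theorem sum_bernsteinBasis_half_sq (n : ℕ) :
    ∑ k ∈ range (n + 1), bernsteinBasis n k (1 / 2) ^ 2 = (2 * n).choose n / 4 ^ n := by
  have hterm : ∀ k ∈ range (n + 1),
      bernsteinBasis n k (1 / 2) ^ 2 = (n.choose k : ℝ) ^ 2 / 4 ^ n := by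
    intro k hk
    rw [bernsteinBasis, show (1 : ℝ) - 1 / 2 = 1 / 2 by norm_num, mul_assoc, ← pow_add,
      Nat.add_sub_cancel' (mem_range_succ_iff.1 hk), mul_pow, ← pow_mul, mul_comm n, pow_mul]
    norm_num
    rw [one_div, inv_pow, div_eq_mul_inv]
  rw [sum_congr rfl hterm, ← sum_div, ← Nat.sum_range_choose_sq]
  push_cast; rfl

theorem sum_bernsteinBasis_half_sq_le (n : ℕ) (x : ℝ) :
    ∑ k ∈ range (n + 1), bernsteinBasis n k (1 / 2) ^ 2 ≤
      ∑ k ∈ range (n + 1), bernsteinBasis n k x ^ 2 := by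
  refine le_of_mul_le_mul_left ?_ two_pi_pos
  rw [← integral_pow_eq_two_pi_mul_sum_bernsteinBasis_sq,
    ← integral_pow_eq_two_pi_mul_sum_bernsteinBasis_sq]
  refine intervalIntegral.integral_mono_on two_pi_pos.le
    (Continuous.intervalIntegrable (by fun_prop) _ _)
    (Continuous.intervalIntegrable (by fun_prop) _ _) fun t _ => ?_
  have hcos := neg_one_le_cos t
  have hcos' := cos_le_one t
  have hx : x * (1 - x) ≤ 1 / 4 := by nlinarith [sq_nonneg (2 * x - 1)]
  exact pow_le_pow_left₀ (by nlinarith) (by nlinarith) n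

theorem choose_div_four_pow_le_sum_bernsteinBasis_sq (n : ℕ) (x : ℝ) :
    ((2 * n).choose n : ℝ) / 4 ^ n ≤ ∑ k ∈ range (n + 1), bernsteinBasis n k x ^ 2 :=
  sum_bernsteinBasis_half_sq n ▸ sum_bernsteinBasis_half_sq_le n x

noncomputable def bernsteinOsc (n : ℕ) (f : ℝ → ℝ) : ℝ :=
  sSup {d : ℝ | ∃ k l : ℕ, k < l ∧ l ≤ n ∧ d = |f (k / n) - f (l / n)|}

theorem bernsteinOsc_nonneg (n : ℕ) (f : ℝ → ℝ) : 0 ≤ bernsteinOsc n f :=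
  Real.sSup_nonneg <| by rintro _ ⟨k, l, -, -, rfl⟩; exact abs_nonneg _

theorem abs_sub_le_bernsteinOsc (f : ℝ → ℝ) {n k l : ℕ} (hk : k ≤ n) (hl : l ≤ n) (hkl : k ≠ l) :
    |f (k / n) - f (l / n)| ≤ bernsteinOsc n f := by
  have hbdd : BddAbove {d : ℝ | ∃ k l : ℕ, k < l ∧ l ≤ n ∧ d = |f (k / n) - f (l / n)|} := by
    refine ((Set.finite_range fun kl : Fin (n + 1) × Fin (n + 1) =>
      |f ((kl.1 : ℕ) / n) - f ((kl.2 : ℕ) / n)|).subset ?_).bddAbove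
    rintro _ ⟨k, l, hkl, hl, rfl⟩
    exact ⟨(⟨k, by omega⟩, ⟨l, by omega⟩), rfl⟩
  rcases hkl.lt_or_gt with h | h
  · exact le_csSup hbdd ⟨k, l, h, hl, rfl⟩
  · rw [abs_sub_comm]
    exact le_csSup hbdd ⟨l, k, h, hk, rfl⟩

theorem bernstein_chebyshev_gruss_central_general (n : ℕ)
    (f g : ℝ → ℝ)
    (x : ℝ) (hx : x ∈ Set.Icc (0:ℝ) 1) :
    |bernsteinOp n (fun t => f t * g t) x - bernsteinOp n f x * bernsteinOp n g x| ≤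
      (1 / 2) * (1 - (1 / 4 ^ n : ℝ) * ((2 * n).choose n : ℝ)) *
        sSup {d : ℝ | ∃ k l : ℕ, k < l ∧ l ≤ n ∧ d = |f (k / n) - f (l / n)|} *
        sSup {d : ℝ | ∃ k l : ℕ, k < l ∧ l ≤ n ∧ d = |g (k / n) - g (l / n)|} := by
  have hcov := abs_weighted_covariance_le (range (n + 1)) (bernsteinBasis n · x)
    (fun k => f (k / n)) (fun k => g (k / n)) (fun k _ => bernsteinBasis_nonneg hx n k)
    (sum_bernsteinBasis n x)
    (fun k hk l hl hkl => abs_sub_le_bernsteinOsc f (mem_range_succ_iff.1 hk)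
      (mem_range_succ_iff.1 hl) hkl)
    (fun k hk l hl hkl => abs_sub_le_bernsteinOsc g (mem_range_succ_iff.1 hk)
      (mem_range_succ_iff.1 hl) hkl)
  have hcoef : 1 - ∑ k ∈ range (n + 1), bernsteinBasis n k x ^ 2 ≤
      1 - (1 / 4 ^ n : ℝ) * ((2 * n).choose n : ℝ) := by
    rw [one_div_mul_eq_div, sub_le_sub_iff_left]
    exact choose_div_four_pow_le_sum_bernsteinBasis_sq n x
  exact hcov.trans <| mul_le_mul_of_nonneg_right (mul_le_mul_of_nonneg_right
    (mul_le_mul_of_nonneg_left hcoef one_half_pos.le) (bernsteinOsc_nonneg n f))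
    (bernsteinOsc_nonneg n g)

/-- The new Chebyshev-Grüss-type inequality for the Bernstein operator:
`|B_n(fg)(x) - B_n f(x) B_n g(x)| ≤ (1/2)(1 - 4^(-n) C(2n,n)) osc(f) osc(g)`. -/
theorem bernstein_chebyshev_gruss_central (n : ℕ) (hn : 1 ≤ n)
    (f g : ℝ → ℝ)
    (hf : ∃ C, ∀ y ∈ Set.Icc (0:ℝ) 1, |f y| ≤ C)
    (hg : ∃ C, ∀ y ∈ Set.Icc (0:ℝ) 1, |g y| ≤ C)
    (x : ℝ) (hx : x ∈ Set.Icc (0:ℝ) 1) :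
    |bernsteinOp n (fun t => f t * g t) x - bernsteinOp n f x * bernsteinOp n g x| ≤
      (1 / 2) * (1 - (1 / 4 ^ n : ℝ) * ((2 * n).choose n : ℝ)) *
        sSup {d : ℝ | ∃ k l : ℕ, k < l ∧ l ≤ n ∧ d = |f (k / n) - f (l / n)|} *
        sSup {d : ℝ | ∃ k l : ℕ, k < l ∧ l ≤ n ∧ d = |g (k / n) - g (l / n)|} :=
  bernstein_chebyshev_gruss_central_general n f g x hx
end
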